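/- arXiv:1406.3150 — 2 statements merged into one kernel-verified Lean document; each statement's English description precedes it below -/
import Mathlib

section
/- Let G = {g_1 = e, ..., g_n} be a finite group, R a commutative ring (or C), and a : G → R a function. Let A be the n×n matrix with entries A_{ij} = a(g_i·g_j^{-1}). Then A = F*·Λ·F, where F is the unitary matrix formed from the matrix entries of the irreducible unitary representations (rows indexed by triples (k,i,j), with entry √(n_k/n)·φ^k_{ij}(g_l)), and Λ is block diagonal: Λ = diag[Λ_1,...,Λ_s] with Λ_k = diag[λ_k,...,λ_k] (n_k copies), where λ_k = Σ_{g∈G} a(g)·Φ_k(g) is an n_k×n_k matrix. -/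
/-!
Averaging `X ↦ ∑ g, ρ g * X * σ g⁻¹` turns any matrix into an intertwiner, which Schur's lemma
forces to vanish for inequivalent `ρ, σ` and to be the scalar `|G| / dim ρ · trace X` for
`ρ = σ` irreducible. Applied to matrix units this is Schur orthogonality: the rows of `F` are
orthonormal, and `F` is square because `∑ n_k² = |G|`, so `Fᴴ F = 1`. On the other hand each
`Φ_k(x)` acts on the rows of `F` as the translation `h ↦ x h` of its columns, so
`Λ F = ∑ₓ a(x) F P_x` with `P_x` the translation matrix, and `Fᴴ Λ F = ∑ₓ a(x) P_x`, whose
`(g, h)` entry is `a(g h⁻¹)`.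
-/

open Matrix Finset

def IsIrreducibleMatrixRep {G K ι : Type*} [Monoid G] [Field K] [Fintype ι] [DecidableEq ι]
    (ρ : G →* Matrix ι ι K) : Prop :=
  ∀ U : Submodule K (ι → K), (∀ g, ∀ v ∈ U, (ρ g).mulVec v ∈ U) → U = ⊥ ∨ U = ⊤

section Average

variable {G : Type*} [Group G] [Fintype G] {R : Type*} [Semiring R] {ι κ : Type*} [Fintype ι]
  [Fintype κ] [DecidableEq ι] [DecidableEq κ]

def twistedAverage (ρ : G →* Matrix ι ι R) (σ : G →* Matrix κ κ R) (X : Matrix ι κ R) :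
    Matrix ι κ R :=
  ∑ g, ρ g * X * σ g⁻¹

theorem mul_twistedAverage (ρ : G →* Matrix ι ι R) (σ : G →* Matrix κ κ R)
    (X : Matrix ι κ R) (h : G) :
    ρ h * twistedAverage ρ σ X = twistedAverage ρ σ X * σ h := by
  simp only [twistedAverage, Matrix.mul_sum, Matrix.sum_mul]
  refine Fintype.sum_equiv (Equiv.mulLeft h) _ _ fun g => ?_
  simp only [Equiv.coe_mulLeft, map_mul, Matrix.mul_assoc, _root_.mul_inv_rev]
  rw [← map_mul, inv_mul_cancel, map_one, Matrix.mul_one]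

theorem twistedAverage_single_apply (ρ : G →* Matrix ι ι R) (σ : G →* Matrix κ κ R)
    (i j : ι) (i' j' : κ) :
    twistedAverage ρ σ (single j j' 1) i i' = ∑ g, ρ g i j * σ g⁻¹ j' i' := by
  simp [twistedAverage, Matrix.sum_apply, Matrix.mul_apply, Matrix.single, ite_and, ite_mul]

theorem sum_apply_mul_inv_apply_eq_zero {ρ : G →* Matrix ι ι R} {σ : G →* Matrix κ κ R}
    (hineq : ∀ T : Matrix ι κ R, (∀ g, ρ g * T = T * σ g) → T = 0) (i j : ι) (i' j' : κ) :
    ∑ g, ρ g i j * σ g⁻¹ j' i' = 0 := by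
  rw [← twistedAverage_single_apply, hineq _ (mul_twistedAverage ρ σ _), Matrix.zero_apply]

end Average

theorem trace_twistedAverage {G : Type*} [Group G] [Fintype G] {R : Type*} [CommSemiring R]
    {ι : Type*} [Fintype ι] [DecidableEq ι] (ρ : G →* Matrix ι ι R) (X : Matrix ι ι R) :
    trace (twistedAverage ρ ρ X) = Fintype.card G • trace X := by
  simp [twistedAverage, trace_sum, trace_mul_cycle _ X, ← map_mul]

theorem exists_eq_smul_one_of_forall_mul_comm {G : Type*} [Monoid G] {K : Type*} [Field K]
    [IsAlgClosed K] {ι : Type*} [Fintype ι] [DecidableEq ι] {ρ : G →* Matrix ι ι K}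
    (hirr : IsIrreducibleMatrixRep ρ)
    {T : Matrix ι ι K} (hT : ∀ g, ρ g * T = T * ρ g) : ∃ c : K, T = c • 1 := by
  cases isEmpty_or_nonempty ι
  · exact ⟨0, Subsingleton.elim _ _⟩
  obtain ⟨c, hc⟩ := Module.End.exists_eigenvalue (mulVecLin T)
  have hstable : ∀ g, ∀ v ∈ Module.End.eigenspace (mulVecLin T) c,
      (ρ g).mulVec v ∈ Module.End.eigenspace (mulVecLin T) c := by
    intro g v hv
    rw [Module.End.mem_eigenspace_iff] at hv ⊢
    simp only [mulVecLin_apply] at hv ⊢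
    rw [mulVec_mulVec, ← hT, ← mulVec_mulVec, hv, mulVec_smul]
  have htop := (hirr _ hstable).resolve_left hc
  refine ⟨c, ext_iff_mulVec.mpr fun v => ?_⟩
  have hv : v ∈ Module.End.eigenspace (mulVecLin T) c := htop ▸ Submodule.mem_top
  rw [Module.End.mem_eigenspace_iff] at hv
  rw [smul_mulVec, one_mulVec]
  exact hv

section Orthogonality

variable {G : Type*} [Group G] [Fintype G] {K : Type*} [Field K] [IsAlgClosed K] [CharZero K]
  {ι : Type*} [Fintype ι] [DecidableEq ι]

theorem twistedAverage_eq_smul_one {ρ : G →* Matrix ι ι K}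
    (hirr : IsIrreducibleMatrixRep ρ)
    (X : Matrix ι ι K) :
    twistedAverage ρ ρ X = ((Fintype.card G / Fintype.card ι : K) * trace X) • 1 := by
  cases isEmpty_or_nonempty ι
  · exact Subsingleton.elim _ _
  obtain ⟨c, hc⟩ := exists_eq_smul_one_of_forall_mul_comm hirr (mul_twistedAverage ρ ρ X)
  have htrace := trace_twistedAverage ρ X
  rw [hc, trace_smul, trace_one, smul_eq_mul, nsmul_eq_mul] at htrace
  rw [hc]
  congr 1
  field_simp
  linear_combination htrace

theorem sum_apply_mul_inv_apply_self {ρ : G →* Matrix ι ι K}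
    (hirr : IsIrreducibleMatrixRep ρ)
    (i j i' j' : ι) :
    ∑ g, ρ g i j * ρ g⁻¹ j' i' =
      if i = i' ∧ j = j' then (Fintype.card G / Fintype.card ι : K) else 0 := by
  rw [← twistedAverage_single_apply, twistedAverage_eq_smul_one hirr, Matrix.smul_apply, one_apply,
    smul_eq_mul]
  by_cases hj : j = j'
  · subst hj
    by_cases hi : i = i' <;> simp [hi, trace_single_eq_same]
  · simp [hj]

end Orthogonality

section MatrixCoeffs

variable {G : Type*} [Monoid G] {R : Type*} [CommSemiring R]
  {κ : Type*} [Fintype κ] [DecidableEq κ] {ι : κ → Type*} [∀ k, Fintype (ι k)]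
  [∀ k, DecidableEq (ι k)]

def matrixCoeffs (c : κ → R) (ρ : ∀ k, G →* Matrix (ι k) (ι k) R) :
    Matrix (Σ k, ι k × ι k) G R :=
  of fun p g => c p.1 * ρ p.1 g p.2.1 p.2.2

theorem blockDiagonal'_mul_matrixCoeffs_apply (M : ∀ k, Matrix (ι k) (ι k) R) (c : κ → R)
    (ρ : ∀ k, G →* Matrix (ι k) (ι k) R) (k : κ) (i j : ι k) (h : G) :
    (blockDiagonal' (fun k => blockDiagonal fun _ : ι k => M k) * matrixCoeffs c ρ) ⟨k, i, j⟩ h =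
      c k * (M k * ρ k h) i j := by
  rw [mul_apply, Fintype.sum_sigma, Finset.sum_eq_single k]
  · simp [Fintype.sum_prod_type, blockDiagonal_apply, matrixCoeffs, mul_apply, Finset.mul_sum,
      mul_left_comm]
  · intro m _ hm
    exact Finset.sum_eq_zero fun p _ => by rw [blockDiagonal'_apply_ne _ _ _ (Ne.symm hm), zero_mul]
  · simp

theorem blockDiagonal'_sum_smul_mul_matrixCoeffs [Fintype G] (c : κ → R)
    (ρ : ∀ k, G →* Matrix (ι k) (ι k) R) (a : G → R) :
    blockDiagonal' (fun k => blockDiagonal fun _ : ι k => ∑ x, a x • ρ k x) * matrixCoeffs c ρ =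
      ∑ x, a x • (matrixCoeffs c ρ).submatrix id (x * ·) := by
  ext ⟨k, i, j⟩ h
  rw [blockDiagonal'_mul_matrixCoeffs_apply]
  simp [Matrix.sum_mul, Matrix.sum_apply, matrixCoeffs, ← map_mul, Finset.mul_sum, mul_left_comm]

end MatrixCoeffs

theorem mul_sum_smul_submatrix_mul_left {G : Type*} [Group G] [Fintype G] [DecidableEq G]
    {R : Type*} [CommSemiring R] {ι : Type*} [Fintype ι] {M : Matrix G ι R} {N : Matrix ι G R}
    (hMN : M * N = 1) (a : G → R) :
    M * ∑ x, a x • N.submatrix id (x * ·) = of fun g h => a (g * h⁻¹) := by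
  have hMN' (x : G) : M * N.submatrix id (x * ·) = (1 : Matrix G G R).submatrix id (x * ·) := by
    rw [← hMN]; rfl
  have hsolve (g h x : G) : g = x * h ↔ x = g * h⁻¹ := by rw [eq_mul_inv_iff_mul_eq, eq_comm]
  ext g h
  simp [Matrix.mul_sum, hMN', Matrix.sum_apply, one_apply, hsolve g h]

theorem map_inv_eq_conjTranspose {G : Type*} [Group G] {α : Type*} [CommRing α] [StarRing α]
    {ι : Type*} [Fintype ι] [DecidableEq ι] {ρ : G →* Matrix ι ι α}
    (hunit : ∀ g, ρ g ∈ unitaryGroup ι α) (g : G) : ρ g⁻¹ = (ρ g)ᴴ :=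
  left_inv_eq_right_inv (by rw [← map_mul, inv_mul_cancel, map_one])
    (mem_unitaryGroup_iff.mp (hunit g))

theorem matrixCoeffs_mul_conjTranspose_eq_one {G : Type*} [Group G] [Fintype G]
    {K : Type*} [Field K] [IsAlgClosed K] [CharZero K] [StarRing K]
    {κ : Type*} [Fintype κ] [DecidableEq κ] {ι : κ → Type*} [∀ k, Fintype (ι k)]
    [∀ k, DecidableEq (ι k)] {ρ : ∀ k, G →* Matrix (ι k) (ι k) K}
    (hunit : ∀ k g, ρ k g ∈ unitaryGroup (ι k) K)
    (hirr : ∀ k, IsIrreducibleMatrixRep (ρ k))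
    (hineq : ∀ k m, k ≠ m → ∀ T : Matrix (ι k) (ι m) K, (∀ g, ρ k g * T = T * ρ m g) → T = 0)
    {c : κ → K} (hc : ∀ k, c k * star (c k) = Fintype.card (ι k) / Fintype.card G) :
    matrixCoeffs c ρ * (matrixCoeffs c ρ)ᴴ = 1 := by
  ext ⟨k, i, j⟩ ⟨m, i', j'⟩
  have hentry : (matrixCoeffs c ρ * (matrixCoeffs c ρ)ᴴ) ⟨k, i, j⟩ ⟨m, i', j'⟩ =
      c k * star (c m) * ∑ g, ρ k g i j * ρ m g⁻¹ j' i' := by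
    simp only [matrixCoeffs, mul_apply, of_apply, conjTranspose_apply, star_mul',
      map_inv_eq_conjTranspose (hunit m), Finset.mul_sum]
    exact Finset.sum_congr rfl fun _ _ => by ring
  rw [hentry]
  obtain rfl | hkm := eq_or_ne k m
  · rw [sum_apply_mul_inv_apply_self (hirr k), hc]
    by_cases hij : i = i' ∧ j = j'
    · obtain ⟨rfl, rfl⟩ := hij
      have : (Fintype.card (ι k) : K) ≠ 0 :=
        Nat.cast_ne_zero.mpr (Fintype.card_pos_iff.mpr ⟨i⟩).ne'
      have : (Fintype.card G : K) ≠ 0 := Nat.cast_ne_zero.mpr Fintype.card_ne_zero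
      rw [if_pos ⟨rfl, rfl⟩, one_apply_eq]
      field_simp
    · rw [if_neg hij, mul_zero, one_apply_ne]
      simpa using hij
  · rw [sum_apply_mul_inv_apply_eq_zero (hineq k m hkm), mul_zero, one_apply_ne]
    exact fun h => hkm (congrArg Sigma.fst h)

/-- Theorem 1 of the paper. For a function `a : G → ℂ` on a finite group
`G`, the matrix `A` with entries `A_{gh} = a(g·h⁻¹)` factors as `A = Fᴴ Λ F`, where `F` is
the unitary matrix of (scaled) matrix entries of the irreducible unitary representations
and `Λ = diag[Λ_1,…,Λ_s]` is block diagonal, `Λ_k` consisting of `n_k` diagonal copies of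
`λ_k = ∑_{g∈G} a(g)·Φ_k(g)`. -/
theorem stmt4 {G : Type*} [Group G] [Fintype G] (s : ℕ) (n : Fin s → ℕ)
    (Φ : (k : Fin s) → G →* Matrix (Fin (n k)) (Fin (n k)) ℂ)
    (hunit : ∀ k g, Φ k g ∈ Matrix.unitaryGroup (Fin (n k)) ℂ)
    (hirr : ∀ k, ∀ U : Submodule ℂ (Fin (n k) → ℂ),
      (∀ g, ∀ v ∈ U, (Φ k g).mulVec v ∈ U) → U = ⊥ ∨ U = ⊤)
    (hineq : ∀ k m, k ≠ m → ∀ T : Matrix (Fin (n k)) (Fin (n m)) ℂ,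
      (∀ g, Φ k g * T = T * Φ m g) → T = 0)
    (hcomplete : ∑ k, (n k) ^ 2 = Fintype.card G)
    (a : G → ℂ)
    (F : Matrix (Σ k : Fin s, Fin (n k) × Fin (n k)) G ℂ)
    (hF : ∀ (k : Fin s) (i j : Fin (n k)) (g : G),
      F ⟨k, (i, j)⟩ g =
        (1 / Real.sqrt (Fintype.card G) : ℂ) * (Real.sqrt (n k) : ℂ) * Φ k g i j) :
    Matrix.of (fun g h : G => a (g * h⁻¹)) =
      F.conjTranspose *
        Matrix.blockDiagonal'
          (fun k => Matrix.blockDiagonal (fun _ : Fin (n k) => ∑ g : G, a g • Φ k g)) *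
        F := by
  classical
  set c : Fin s → ℂ := fun k => (1 / Real.sqrt (Fintype.card G) : ℂ) * (Real.sqrt (n k) : ℂ)
  have hFc : F = matrixCoeffs c Φ := by
    ext ⟨k, i, j⟩ g
    exact hF k i j g
  have hc (k : Fin s) : c k * star (c k) = Fintype.card (Fin (n k)) / Fintype.card G := by
    have hsq (x : ℕ) : (Real.sqrt x : ℂ) * Real.sqrt x = x := by
      rw [← Complex.ofReal_mul, Real.mul_self_sqrt x.cast_nonneg, Complex.ofReal_natCast]
    rw [Fintype.card_fin, ← hsq, ← hsq]
    simp only [one_div, star_mul', star_inv₀, RCLike.star_def, Complex.conj_ofReal, c]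
    ring
  have hcard : Fintype.card (Σ k : Fin s, Fin (n k) × Fin (n k)) = Fintype.card G := by
    simp [← hcomplete, sq]
  have hFF : Fᴴ * F = 1 := (mul_eq_one_comm_of_equiv (Fintype.equivOfCardEq hcard)).mp
    (hFc ▸ matrixCoeffs_mul_conjTranspose_eq_one hunit hirr hineq hc)
  rw [Matrix.mul_assoc, hFc, blockDiagonal'_sum_smul_mul_matrixCoeffs,
    mul_sum_smul_submatrix_mul_left (hFc ▸ hFF)]
end

section
/- Let G be a finite group of order n and a : G → C. The determinant of the n×n matrix A with entries A_{ij} = a(g_i·g_j^{-1}) equals the product over all irreducible representations Φ_k of det(Σ_{g∈G} a(g)·Φ_k(g))^{n_k}, where n_k = deg Φ_k. (Frobenius determinant formula as a consequence of the diagonalization A = F*ΛF.) -/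
open Matrix

/-- Determinant of a dependent block diagonal matrix. -/
lemma my_det_blockDiagonal' {ι : Type*} [Fintype ι] [DecidableEq ι] {m : ι → Type*}
    [∀ i, Fintype (m i)] [∀ i, DecidableEq (m i)] (M : ∀ i, Matrix (m i) (m i) ℂ) :
    (Matrix.blockDiagonal' M).det = ∏ i, (M i).det := by
  letI : LinearOrder ι := LinearOrder.lift' (Fintype.equivFin ι) (Fintype.equivFin ι).injective
  have hbt : (Matrix.blockDiagonal' M).BlockTriangular Sigma.fst := by
    rintro ⟨k, i⟩ ⟨k', j⟩ h
    exact Matrix.blockDiagonal'_apply_ne _ _ _ (ne_of_gt h)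
  rw [hbt.det_fintype]
  refine Finset.prod_congr rfl fun p _ => ?_
  let e : m p ≃ {x : Σ i, m i // x.1 = p} :=
    { toFun := fun j => ⟨⟨p, j⟩, rfl⟩
      invFun := fun x => x.prop ▸ x.val.2
      left_inv := fun j => rfl
      right_inv := by rintro ⟨⟨q, j⟩, rfl⟩; rfl }
  rw [← Matrix.det_submatrix_equiv_self e ((Matrix.blockDiagonal' M).toSquareBlock Sigma.fst p)]
  congr 1
  ext i j
  simp [Matrix.toSquareBlock_def, e]

/-- Schur's lemma: a matrix commuting with all of an irreducible representation is scalar. -/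
lemma my_schur {G : Type*} [Group G] {d : ℕ} (Ψ : G →* Matrix (Fin d) (Fin d) ℂ)
    (hirr : ∀ U : Submodule ℂ (Fin d → ℂ),
      (∀ g, ∀ v ∈ U, (Ψ g).mulVec v ∈ U) → U = ⊥ ∨ U = ⊤)
    (T : Matrix (Fin d) (Fin d) ℂ) (hT : ∀ g, Ψ g * T = T * Ψ g) :
    ∃ c : ℂ, T = c • 1 := by
  rcases Nat.eq_zero_or_pos d with hd | hd
  · subst hd
    exact ⟨0, by ext i j; exact i.elim0⟩
  haveI : Nonempty (Fin d) := ⟨⟨0, hd⟩⟩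
  obtain ⟨c, hc⟩ := Module.End.exists_eigenvalue (Matrix.toLin' T)
  obtain ⟨v, hv⟩ := hc.exists_hasEigenvector
  refine ⟨c, ?_⟩
  set U : Submodule ℂ (Fin d → ℂ) := LinearMap.ker (Matrix.toLin' (T - c • 1)) with hU
  have hmem : ∀ w, w ∈ U ↔ T.mulVec w = c • w := by
    intro w
    simp [hU, LinearMap.mem_ker, Matrix.toLin'_apply, Matrix.sub_mulVec,
      Matrix.smul_mulVec, Matrix.one_mulVec, sub_eq_zero]
  have hinv : ∀ g, ∀ w ∈ U, (Ψ g).mulVec w ∈ U := by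
    intro g w hw
    rw [hmem] at hw ⊢
    rw [Matrix.mulVec_mulVec, ← hT g, ← Matrix.mulVec_mulVec, hw, Matrix.mulVec_smul]
  rcases hirr U hinv with h | h
  · exfalso
    have hvU : v ∈ U := (hmem v).2 (by
      have := hv.apply_eq_smul
      rwa [Matrix.toLin'_apply] at this)
    rw [h, Submodule.mem_bot] at hvU
    exact hv.2 hvU
  · have hall : ∀ w, T.mulVec w = c • w := fun w => (hmem w).1 (h ▸ Submodule.mem_top)
    apply Matrix.toLin'.injective
    exact LinearMap.ext fun w => by
      simp [Matrix.toLin'_apply, hall w, Matrix.smul_mulVec, Matrix.one_mulVec]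

/-- Frobenius determinant formula. For a finite group `G` of order `n`
and `a : G → ℂ`, the determinant of the matrix `A` with entries `A_{gh} = a(g h⁻¹)`
equals `∏_k det(∑_{g∈G} a(g)·Φ_k(g))^{n_k}`, the product over a complete set of
inequivalent irreducible (unitary) representations `Φ_k` of degrees `n_k`. -/
theorem stmt13 {G : Type*} [Group G] [Fintype G] [DecidableEq G] (s : ℕ) (n : Fin s → ℕ)
    (Φ : (k : Fin s) → G →* Matrix (Fin (n k)) (Fin (n k)) ℂ)
    (hunit : ∀ k g, Φ k g ∈ Matrix.unitaryGroup (Fin (n k)) ℂ)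
    (hirr : ∀ k, ∀ U : Submodule ℂ (Fin (n k) → ℂ),
      (∀ g, ∀ v ∈ U, (Φ k g).mulVec v ∈ U) → U = ⊥ ∨ U = ⊤)
    (hineq : ∀ k m, k ≠ m → ∀ T : Matrix (Fin (n k)) (Fin (n m)) ℂ,
      (∀ g, Φ k g * T = T * Φ m g) → T = 0)
    (hcomplete : ∑ k, (n k) ^ 2 = Fintype.card G)
    (a : G → ℂ) :
    (Matrix.of (fun g h : G => a (g * h⁻¹))).det =
      ∏ k : Fin s, (∑ g : G, a g • Φ k g).det ^ (n k) := by
  classical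
  set cG : ℂ := (Fintype.card G : ℂ) with hcGdef
  set A : Matrix G G ℂ := Matrix.of (fun g h : G => a (g * h⁻¹)) with hA
  set B : Matrix (Σ p : Σ k : Fin s, Fin (n k), Fin (n p.1)) G ℂ :=
    Matrix.of (fun x g => Φ x.1.1 g x.2 x.1.2) with hB
  set C : Matrix G (Σ p : Σ k : Fin s, Fin (n k), Fin (n p.1)) ℂ :=
    Matrix.of (fun g x => Φ x.1.1 g⁻¹ x.1.2 x.2) with hC
  set D : Matrix (Σ p : Σ k : Fin s, Fin (n k), Fin (n p.1))
      (Σ p : Σ k : Fin s, Fin (n k), Fin (n p.1)) ℂ :=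
    Matrix.blockDiagonal' (fun p : Σ k : Fin s, Fin (n k) => ∑ g, a g • Φ p.1 g) with hD
  set E : Matrix (Σ p : Σ k : Fin s, Fin (n k), Fin (n p.1))
      (Σ p : Σ k : Fin s, Fin (n k), Fin (n p.1)) ℂ :=
    Matrix.blockDiagonal' (fun p : Σ k : Fin s, Fin (n k) => ((n p.1 : ℂ) / cG) • 1) with hE
  have hnz : ∀ p : Σ k : Fin s, Fin (n k), (n p.1 : ℂ) ≠ 0 :=
    fun p => Nat.cast_ne_zero.2 p.2.pos.ne'
  have hcG : cG ≠ 0 := Nat.cast_ne_zero.2 Fintype.card_ne_zero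
  -- the averaged intertwiner
  have key : ∀ (k m : Fin s) (X : Matrix (Fin (n k)) (Fin (n m)) ℂ) (h : G),
      Φ k h * (∑ g, Φ k g * X * Φ m g⁻¹) = (∑ g, Φ k g * X * Φ m g⁻¹) * Φ m h := by
    intro k m X h
    rw [Matrix.mul_sum, Matrix.sum_mul]
    refine Fintype.sum_bijective (fun g => h * g)
      (Group.mulLeft_bijective h) _ _ fun g => ?_
    simp only [_root_.mul_inv_rev, _root_.map_mul, Matrix.mul_assoc]
    rw [← _root_.map_mul (Φ m), inv_mul_cancel, _root_.map_one, mul_one]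
  -- trace of the averaged intertwiner
  have keytr : ∀ (k : Fin s) (X : Matrix (Fin (n k)) (Fin (n k)) ℂ),
      Matrix.trace (∑ g, Φ k g * X * Φ k g⁻¹) = cG * Matrix.trace X := by
    intro k X
    rw [Matrix.trace_sum]
    have : ∀ g : G, Matrix.trace (Φ k g * X * Φ k g⁻¹) = Matrix.trace X := by
      intro g
      rw [Matrix.trace_mul_comm, ← mul_assoc, ← _root_.map_mul, inv_mul_cancel,
        _root_.map_one, one_mul]
    simp [this, Finset.sum_const, Finset.card_univ, nsmul_eq_mul, hcGdef]
  -- entry extraction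
  have entry : ∀ (k m : Fin s) (j : Fin (n k)) (j' : Fin (n m)) (i : Fin (n k))
      (i' : Fin (n m)) (g : G),
      (Φ k g * Matrix.single j j' (1 : ℂ) * Φ m g⁻¹) i i'
        = Φ k g i j * Φ m g⁻¹ j' i' := by
    intro k m j j' i i' g
    simp only [Matrix.mul_apply, Matrix.single, Matrix.of_apply, ite_and,
      mul_ite, ite_mul, zero_mul, mul_zero, Finset.sum_ite_eq, Finset.sum_ite_eq',
      Finset.mem_univ, if_true, mul_one, one_mul]
  -- Schur orthogonality
  have orth : B * C = Matrix.blockDiagonal'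
      (fun p : Σ k : Fin s, Fin (n k) => (cG / (n p.1 : ℂ)) • 1) := by
    ext x y
    obtain ⟨⟨k, j⟩, i⟩ := x
    obtain ⟨⟨m, j'⟩, i'⟩ := y
    rw [Matrix.mul_apply]
    have hsum : ∀ X : Matrix (Fin (n k)) (Fin (n m)) ℂ,
        (∑ g, Φ k g * X * Φ m g⁻¹) i i' = ∑ g : G, (Φ k g * X * Φ m g⁻¹) i i' := by
      intro X; rw [Matrix.sum_apply]
    by_cases hkm : k = m
    · subst hkm
      obtain ⟨c, hc⟩ := my_schur (Φ k) (hirr k)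
        (∑ g, Φ k g * Matrix.single j j' (1 : ℂ) * Φ k g⁻¹)
        (fun h => key k k _ h)
      have htr : c * (n k : ℂ) = cG * Matrix.trace (Matrix.single j j' (1 : ℂ)) := by
        have := congrArg Matrix.trace hc
        rw [keytr, Matrix.trace_smul, Matrix.trace_one, smul_eq_mul, Fintype.card_fin] at this
        exact this.symm
      by_cases hjj : j = j'
      · subst hjj
        have htr1 : Matrix.trace (Matrix.single j j (1 : ℂ)) = 1 := by
          simp [Matrix.trace, Matrix.diag, Matrix.single]
        have hcval : c = cG / (n k : ℂ) := by
          rw [eq_div_iff (hnz ⟨k, j⟩), htr, htr1, mul_one]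
        have hthis := congrFun (congrFun hc i) i'
        rw [hsum] at hthis
        have lhs2 : ∑ g : G, B ⟨⟨k, j⟩, i⟩ g * C g ⟨⟨k, j⟩, i'⟩
            = ∑ g : G, (Φ k g * Matrix.single j j (1 : ℂ) * Φ k g⁻¹) i i' :=
          Finset.sum_congr rfl fun g _ => by rw [entry]; rfl
        rw [Matrix.blockDiagonal'_apply_eq, lhs2, hthis, hcval]
      · have hc0 : c = 0 := by
          have htr0 : Matrix.trace (Matrix.single j j' (1 : ℂ)) = 0 := by
            simp only [Matrix.trace, Matrix.diag, Matrix.single, Matrix.of_apply]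
            simp only [ite_and]
            refine Finset.sum_eq_zero fun x _ => ?_
            by_cases h1 : j = x
            · subst h1
              rw [if_pos rfl, if_neg (fun hh => hjj hh.symm)]
            · rw [if_neg h1]
          have h2 := htr
          rw [htr0, mul_zero] at h2
          exact (mul_eq_zero.mp h2).resolve_right (hnz ⟨k, j⟩)
        have hT0 : (∑ g, Φ k g * Matrix.single j j' (1 : ℂ) * Φ k g⁻¹) = 0 := by
          rw [hc, hc0, zero_smul]
        have hthis := congrFun (congrFun hT0 i) i'
        rw [hsum] at hthis
        have hne : (⟨k, j⟩ : Σ k : Fin s, Fin (n k)) ≠ ⟨k, j'⟩ :=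
          fun hh => hjj (eq_of_heq (Sigma.mk.inj_iff.mp hh).2)
        rw [Matrix.blockDiagonal'_apply_ne _ _ _ hne]
        have lhs2 : ∑ g : G, B ⟨⟨k, j⟩, i⟩ g * C g ⟨⟨k, j'⟩, i'⟩
            = ∑ g : G, (Φ k g * Matrix.single j j' (1 : ℂ) * Φ k g⁻¹) i i' :=
          Finset.sum_congr rfl fun g _ => by rw [entry]; rfl
        rw [lhs2, hthis]
        rfl
    · have hT0 := hineq k m hkm
        (∑ g, Φ k g * Matrix.single j j' (1 : ℂ) * Φ m g⁻¹)
        (fun h => key k m _ h)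
      have hthis := congrFun (congrFun hT0 i) i'
      rw [hsum] at hthis
      have hne : (⟨k, j⟩ : Σ k : Fin s, Fin (n k)) ≠ ⟨m, j'⟩ :=
        fun hh => hkm (congrArg Sigma.fst hh)
      rw [Matrix.blockDiagonal'_apply_ne _ _ _ hne]
      have lhs2 : ∑ g : G, B ⟨⟨k, j⟩, i⟩ g * C g ⟨⟨m, j'⟩, i'⟩
          = ∑ g : G, (Φ k g * Matrix.single j j' (1 : ℂ) * Φ m g⁻¹) i i' :=
        Finset.sum_congr rfl fun g _ => by rw [entry]; rfl
      rw [lhs2, hthis]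
      rfl
  -- B is invertible with inverse C * E
  have hBM : B * (C * E) = 1 := by
    rw [← Matrix.mul_assoc, orth, hE, ← Matrix.blockDiagonal'_mul]
    have heq : (fun p : Σ k : Fin s, Fin (n k) =>
        ((cG / (n p.1 : ℂ)) • (1 : Matrix (Fin (n p.1)) (Fin (n p.1)) ℂ))
          * (((n p.1 : ℂ) / cG) • 1)) = fun p : Σ k : Fin s, Fin (n k) => (1 : Matrix (Fin (n p.1)) (Fin (n p.1)) ℂ) := by
      funext p
      rw [smul_mul_smul_comm, one_mul]
      rw [show cG / (n p.1 : ℂ) * ((n p.1 : ℂ) / cG) = 1 by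
        rw [div_mul_div_comm, mul_comm, div_self (mul_ne_zero (hnz p) hcG)]]
      rw [one_smul]
    rw [heq]
    exact Matrix.blockDiagonal'_one
  -- the intertwining relation B A = D B
  have hcomm : B * A = D * B := by
    ext x h
    obtain ⟨⟨k, j⟩, i⟩ := x
    rw [Matrix.mul_apply, Matrix.mul_apply]
    have lhs : ∑ g : G, B ⟨⟨k, j⟩, i⟩ g * A g h = ∑ g : G, a g * Φ k (g * h) i j := by
      refine (Fintype.sum_bijective (fun g => g * h)
        (Group.mulRight_bijective h) _ _ fun g => ?_).symm
      show a g * Φ k (g * h) i j = Φ k (g * h) i j * a (g * h * h⁻¹)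
      rw [mul_inv_cancel_right, mul_comm]
    rw [lhs]
    rw [← Finset.univ_sigma_univ, Finset.sum_sigma]
    rw [Finset.sum_eq_single (⟨k, j⟩ : Σ k : Fin s, Fin (n k))]
    · have hDe : ∀ l : Fin (n k),
          D ⟨⟨k, j⟩, i⟩ ⟨⟨k, j⟩, l⟩ = (∑ g, a g • Φ k g) i l := fun l =>
        Matrix.blockDiagonal'_apply_eq _ _ _ _
      calc ∑ g : G, a g * Φ k (g * h) i j
          = ∑ g : G, a g * ∑ l, Φ k g i l * Φ k h l j := by
            refine Finset.sum_congr rfl fun g _ => ?_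
            rw [_root_.map_mul, Matrix.mul_apply]
        _ = ∑ l, (∑ g : G, a g * Φ k g i l) * Φ k h l j := by
            simp_rw [Finset.mul_sum, Finset.sum_mul, mul_assoc]
            rw [Finset.sum_comm]
        _ = ∑ l, D ⟨⟨k, j⟩, i⟩ ⟨⟨k, j⟩, l⟩ * B ⟨⟨k, j⟩, l⟩ h := by
            refine Finset.sum_congr rfl fun l _ => ?_
            rw [hDe l]
            congr 1
            rw [Matrix.sum_apply]
            refine Finset.sum_congr rfl fun g _ => ?_
            rw [Matrix.smul_apply, smul_eq_mul]
    · intro q _ hq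
      refine Finset.sum_eq_zero fun l _ => ?_
      have hz : D ⟨⟨k, j⟩, i⟩ ⟨q, l⟩ = 0 :=
        Matrix.blockDiagonal'_apply_ne _ _ _ (Ne.symm hq)
      rw [hz, zero_mul]
    · simp
  -- cardinality
  have hcard : Fintype.card (Σ p : Σ k : Fin s, Fin (n k), Fin (n p.1)) = Fintype.card G := by
    rw [← hcomplete, Fintype.card_sigma]
    simp only [Fintype.card_fin]
    rw [← Finset.univ_sigma_univ, Finset.sum_sigma]
    refine Finset.sum_congr rfl fun k _ => ?_
    simp [sq, Finset.sum_const, Finset.card_univ]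
  let e : (Σ p : Σ k : Fin s, Fin (n k), Fin (n p.1)) ≃ G := Fintype.equivOfCardEq hcard
  set Bq : Matrix G G ℂ := B.submatrix e.symm id with hBq
  set Mq : Matrix G G ℂ := (C * E).submatrix id e.symm with hMq
  set Dq : Matrix G G ℂ := D.submatrix e.symm e.symm with hDq
  have h1 : Bq * Mq = 1 := by
    ext g h
    rw [Matrix.mul_apply]
    have hh := congrFun (congrFun hBM (e.symm g)) (e.symm h)
    rw [Matrix.mul_apply] at hh
    calc ∑ x : G, Bq g x * Mq x h
        = (1 : Matrix (Σ p : Σ k : Fin s, Fin (n k), Fin (n p.1)) _ ℂ)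
            (e.symm g) (e.symm h) := hh
      _ = (1 : Matrix G G ℂ) g h := by
          by_cases hgh : g = h
          · subst hgh; simp
          · rw [Matrix.one_apply_ne (fun hx => hgh (e.symm.injective hx)),
              Matrix.one_apply_ne hgh]
  have h2 : Mq * Bq = 1 := mul_eq_one_comm.mp h1
  have h3 : Bq * A = Dq * Bq := by
    ext g h
    rw [Matrix.mul_apply, Matrix.mul_apply]
    have hh := congrFun (congrFun hcomm (e.symm g)) h
    rw [Matrix.mul_apply, Matrix.mul_apply] at hh
    calc ∑ x : G, Bq g x * A x h
        = ∑ y, D (e.symm g) y * B y h := hh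
      _ = ∑ x : G, Dq g x * Bq x h :=
          (Equiv.sum_comp e.symm fun y => D (e.symm g) y * B y h).symm
  have hAeq : A = Mq * (Dq * Bq) := by
    calc A = 1 * A := (one_mul A).symm
      _ = (Mq * Bq) * A := by rw [h2]
      _ = Mq * (Bq * A) := by rw [mul_assoc]
      _ = Mq * (Dq * Bq) := by rw [h3]
  have hdet : A.det = D.det := by
    rw [hAeq, Matrix.det_mul, Matrix.det_mul]
    have hmb : Mq.det * Bq.det = 1 := by rw [← Matrix.det_mul, h2, Matrix.det_one]
    calc Mq.det * (Dq.det * Bq.det) = Dq.det * (Mq.det * Bq.det) := by ring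
      _ = Dq.det := by rw [hmb, mul_one]
      _ = D.det := by rw [hDq]; exact Matrix.det_submatrix_equiv_self e.symm D
  rw [hdet, hD, my_det_blockDiagonal']
  rw [← Finset.univ_sigma_univ, Finset.prod_sigma]
  refine Finset.prod_congr rfl fun k _ => ?_
  show (∏ _j : Fin (n k), (∑ g : G, a g • Φ k g).det) = (∑ g : G, a g • Φ k g).det ^ n k
  rw [Finset.prod_const, Finset.card_univ, Fintype.card_fin]
end
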